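/- arXiv:1208.4860 — 3 statements merged into one kernel-verified Lean document; each statement's English description precedes it below -/
import Mathlib

section
/- For the fractional Zener complex modulus E(ω) = (1 + b(iω)^α)/(1 + a(iω)^α) with 0 < a ≤ b, α ∈ (0,1), and ω > 0, the real part E'(ω) and the imaginary part E''(ω) are both nonnegative. -/
open Complex Real

/-!
Write `z = (iω)^α`. Since `arg (iω) = π/2`, `z` has argument `απ/2 ∈ [0, π/2]`, so it lies in
the closed first quadrant. Multiplying numerator and denominator of `(1 + b z)/(1 + a z)` by
`conj (1 + a z)` gives real part `((1 + b Re z)(1 + a Re z) + a b (Im z)²) / |1 + a z|²` and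
imaginary part `(b - a) Im z / |1 + a z|²`, both visibly nonnegative.
-/

namespace Complex

lemma cpow_ofReal_re_nonneg {x : ℂ} {y : ℝ} (h : |arg x * y| ≤ π / 2) :
    0 ≤ (x ^ (y : ℂ)).re := by
  rw [cpow_ofReal_re]
  exact mul_nonneg (by positivity)
    (Real.cos_nonneg_of_neg_pi_div_two_le_of_le (neg_le_of_abs_le h) (le_of_abs_le h))

lemma cpow_ofReal_im_nonneg {x : ℂ} {y : ℝ} (h₀ : 0 ≤ arg x * y) (h₁ : arg x * y ≤ π) :
    0 ≤ (x ^ (y : ℂ)).im := by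
  rw [cpow_ofReal_im]
  exact mul_nonneg (by positivity) (Real.sin_nonneg_of_nonneg_of_le_pi h₀ h₁)

lemma arg_I_mul_ofReal {ω : ℝ} (hω : 0 < ω) : arg (I * ω) = π / 2 := by
  rw [arg_mul_real hω, arg_I]

section Moebius

variable (a b : ℝ) (z : ℂ)

lemma re_one_add_mul_div_one_add_mul :
    ((1 + b * z) / (1 + a * z)).re =
      ((1 + b * z.re) * (1 + a * z.re) + a * b * z.im ^ 2) / normSq (1 + a * z) := by
  rw [div_re, ← add_div]
  congr 1
  simp only [add_re, add_im, one_re, one_im, re_ofReal_mul, im_ofReal_mul]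
  ring

lemma im_one_add_mul_div_one_add_mul :
    ((1 + b * z) / (1 + a * z)).im = (b - a) * z.im / normSq (1 + a * z) := by
  rw [div_im, div_sub_div_same]
  congr 1
  simp only [add_re, add_im, one_re, one_im, re_ofReal_mul, im_ofReal_mul]
  ring

variable {a b z}

lemma re_one_add_mul_div_one_add_mul_nonneg (ha : 0 ≤ a) (hb : 0 ≤ b) (hz : 0 ≤ z.re) :
    0 ≤ ((1 + b * z) / (1 + a * z)).re := by
  rw [re_one_add_mul_div_one_add_mul]
  exact div_nonneg (by positivity) (normSq_nonneg _)

lemma im_one_add_mul_div_one_add_mul_nonneg (hab : a ≤ b) (hz : 0 ≤ z.im) :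
    0 ≤ ((1 + b * z) / (1 + a * z)).im := by
  rw [im_one_add_mul_div_one_add_mul]
  exact div_nonneg (mul_nonneg (sub_nonneg.2 hab) hz) (normSq_nonneg _)

end Moebius

end Complex

/-- For the fractional Zener complex modulus `E(ω) = (1 + b(iω)^α)/(1 + a(iω)^α)`,
with `0 < a ≤ b`, `α ∈ (0,1)` and `ω > 0`, both the storage modulus `Re E(ω)` and the
loss modulus `Im E(ω)` are nonnegative. -/
theorem fractional_zener_storage_loss_nonneg (a b α : ℝ) (ha : 0 < a) (hab : a ≤ b)
    (hα0 : 0 < α) (hα1 : α < 1) (ω : ℝ) (hω : 0 < ω) :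
    0 ≤ ((1 + (b : ℂ) * (Complex.I * ω) ^ (α : ℂ)) / (1 + (a : ℂ) * (Complex.I * ω) ^ (α : ℂ))).re ∧
    0 ≤ ((1 + (b : ℂ) * (Complex.I * ω) ^ (α : ℂ)) / (1 + (a : ℂ) * (Complex.I * ω) ^ (α : ℂ))).im := by
  have hθ₀ : 0 ≤ arg (I * ω) * α := by rw [arg_I_mul_ofReal hω]; positivity
  have hθ₁ : arg (I * ω) * α ≤ π / 2 := by
    rw [arg_I_mul_ofReal hω]
    exact mul_le_of_le_one_right (by positivity) hα1.le
  exact ⟨re_one_add_mul_div_one_add_mul_nonneg ha.le (ha.le.trans hab)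
      (cpow_ofReal_re_nonneg (abs_le.2 ⟨by linarith, hθ₁⟩)),
    im_one_add_mul_div_one_add_mul_nonneg hab
      (cpow_ofReal_im_nonneg hθ₀ (by linarith [pi_pos]))⟩
end

section
/- For the fractional Zener model with 0 < a ≤ b and α ∈ (0,1), and f(iω) = 1 − ω² E(ω)⁻¹ where E(ω) = (1 + b(iω)^α)/(1 + a(iω)^α), one has Im f(iω) = ω² E''(ω)/((E'(ω))² + (E''(ω))²) > 0 for every ω > 0, provided a < b. -/
open Complex

/-! Writing `z = (iω)^α`, the modulus `E = (1 + b z)/(1 + a z)` has `Im E = (b - a) Im z / |1 + a z|²`,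
and `Im z = ω^α sin(απ/2) > 0`; so `Im E > 0` when `a < b`. Since `Im (1 - ω² E⁻¹) = ω² Im E / |E|²`,
positivity of `Im f` follows. -/

namespace Complex

theorem im_one_sub_ofReal_mul_inv (r : ℝ) (w : ℂ) :
    (1 - (r : ℂ) * w⁻¹).im = r * w.im / (w.re ^ 2 + w.im ^ 2) := by
  rw [sub_im, one_im, im_ofReal_mul, inv_im, normSq_apply]
  ring

theorem im_cpow_I_mul_ofReal_pos {ω α : ℝ} (hω : 0 < ω) (hα0 : 0 < α) (hα2 : α < 2) :
    0 < ((I * ω) ^ (α : ℂ)).im := by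
  have harg : (I * ω).arg = Real.pi / 2 := by
    rw [mul_comm, arg_real_mul _ hω, arg_I]
  rw [cpow_ofReal_im, harg]
  refine mul_pos (Real.rpow_pos_of_pos (norm_pos_iff.2 (mul_ne_zero I_ne_zero (ofReal_ne_zero.2 hω.ne'))) _) (Real.sin_pos_of_pos_of_lt_pi ?_ ?_)
  · positivity
  · nlinarith [Real.pi_pos]

theorem one_add_ofReal_mul_ne_zero (a : ℝ) {z : ℂ} (hz : 0 < z.im) : 1 + (a : ℂ) * z ≠ 0 := by
  rcases eq_or_ne a 0 with rfl | ha
  · simp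
  · intro h
    have him := congrArg im h
    rw [add_im, one_im, im_ofReal_mul, zero_im, zero_add] at him
    exact ha ((mul_eq_zero.1 him).resolve_right hz.ne')

theorem im_one_add_ofReal_mul_div (a b : ℝ) (z : ℂ) :
    ((1 + (b : ℂ) * z) / (1 + (a : ℂ) * z)).im = (b - a) * z.im / normSq (1 + (a : ℂ) * z) := by
  rw [div_im, ← sub_div]
  congr 1
  simp only [add_re, add_im, one_re, one_im, re_ofReal_mul, im_ofReal_mul]
  ring

theorem im_one_add_ofReal_mul_div_pos {a b : ℝ} (hab : a < b) {z : ℂ} (hz : 0 < z.im) :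
    0 < ((1 + (b : ℂ) * z) / (1 + (a : ℂ) * z)).im := by
  rw [im_one_add_ofReal_mul_div]
  exact div_pos (mul_pos (sub_pos.2 hab) hz) (normSq_pos.2 (one_add_ofReal_mul_ne_zero a hz))

end Complex

theorem fractional_zener_im_f_pos_general (a b α : ℝ) (hab : a < b)
    (hα0 : 0 < α) (hα1 : α < 1) (ω : ℝ) (hω : 0 < ω) :
    ((1 : ℂ) - (ω : ℂ) ^ 2 *
        ((1 + (b : ℂ) * (Complex.I * ω) ^ (α : ℂ)) / (1 + (a : ℂ) * (Complex.I * ω) ^ (α : ℂ)))⁻¹).im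
      = ω ^ 2 * ((1 + (b : ℂ) * (Complex.I * ω) ^ (α : ℂ)) / (1 + (a : ℂ) * (Complex.I * ω) ^ (α : ℂ))).im /
        (((1 + (b : ℂ) * (Complex.I * ω) ^ (α : ℂ)) / (1 + (a : ℂ) * (Complex.I * ω) ^ (α : ℂ))).re ^ 2 +
         ((1 + (b : ℂ) * (Complex.I * ω) ^ (α : ℂ)) / (1 + (a : ℂ) * (Complex.I * ω) ^ (α : ℂ))).im ^ 2) ∧
    0 < ((1 : ℂ) - (ω : ℂ) ^ 2 *
        ((1 + (b : ℂ) * (Complex.I * ω) ^ (α : ℂ)) / (1 + (a : ℂ) * (Complex.I * ω) ^ (α : ℂ)))⁻¹).im := by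
  set E := (1 + (b : ℂ) * (I * ω) ^ (α : ℂ)) / (1 + (a : ℂ) * (I * ω) ^ (α : ℂ))
  have hE : 0 < E.im :=
    im_one_add_ofReal_mul_div_pos hab (im_cpow_I_mul_ofReal_pos hω hα0 (by linarith))
  have key : (1 - (ω : ℂ) ^ 2 * E⁻¹).im = ω ^ 2 * E.im / (E.re ^ 2 + E.im ^ 2) := by
    exact_mod_cast im_one_sub_ofReal_mul_inv (ω ^ (2 : ℕ)) E
  refine ⟨key, key ▸ ?_⟩
  positivity

/-- For the fractional Zener model with `0 < a < b`, `α ∈ (0,1)`, setting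
`E(ω) = (1 + b(iω)^α)/(1 + a(iω)^α)` and `f(iω) = 1 − ω² E(ω)⁻¹`, one has
`Im f(iω) = ω² E''(ω)/((E'(ω))² + (E''(ω))²) > 0` for every `ω > 0`. -/
theorem fractional_zener_im_f_pos (a b α : ℝ) (ha : 0 < a) (hab : a < b)
    (hα0 : 0 < α) (hα1 : α < 1) (ω : ℝ) (hω : 0 < ω) :
    ((1 : ℂ) - (ω : ℂ) ^ 2 *
        ((1 + (b : ℂ) * (Complex.I * ω) ^ (α : ℂ)) / (1 + (a : ℂ) * (Complex.I * ω) ^ (α : ℂ)))⁻¹).im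
      = ω ^ 2 * ((1 + (b : ℂ) * (Complex.I * ω) ^ (α : ℂ)) / (1 + (a : ℂ) * (Complex.I * ω) ^ (α : ℂ))).im /
        (((1 + (b : ℂ) * (Complex.I * ω) ^ (α : ℂ)) / (1 + (a : ℂ) * (Complex.I * ω) ^ (α : ℂ))).re ^ 2 +
         ((1 + (b : ℂ) * (Complex.I * ω) ^ (α : ℂ)) / (1 + (a : ℂ) * (Complex.I * ω) ^ (α : ℂ))).im ^ 2) ∧
    0 < ((1 : ℂ) - (ω : ℂ) ^ 2 *
        ((1 + (b : ℂ) * (Complex.I * ω) ^ (α : ℂ)) / (1 + (a : ℂ) * (Complex.I * ω) ^ (α : ℂ)))⁻¹).im :=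
  fractional_zener_im_f_pos_general a b α hab hα0 hα1 ω hω
end

section
/- Let M(s) = sqrt((1+as^α)/(1+bs^α)) with 0 < a < b, α ∈ (0,1), and let s₀ be a zero of f(s) = 1 + (sM(s))² in the slit plane. Then s₀ is a simple zero: f'(s₀) ≠ 0, where f'(s) = 2sM(s)² + s²·d/ds[M(s)²] and d/ds[M(s)²] = α s^{α−1}(a − b)/(1 + b s^α)². -/
/-!
Write `u = s^α`, `N = 1 + a u`, `D = 1 + b u`. If `s` were a double zero, then `s² N = -D` and
`2 N D + α u (a - b) = 0`; eliminating gives `2 b u = -(2 + α) - α s²` and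
`2 a s² u = α + (α - 2) s²`. As `a` and `b` are real, these make `u`, resp. `s² u`, a real multiple of
a known expression in `s`; combining the two conditions in polar form `s = r e^{iθ}`,
`u = r^α e^{iαθ}` yields `sin² (αθ) = α² sin² θ cos² θ`. This contradicts the strict concavity of
`sin` on `[0, π]`, which gives `α |sin θ| < |sin (αθ)|` for `0 < |θ| ≤ π`. For `θ = 0` the first
equation already fails, its two sides having opposite signs.
-/

open Complex

namespace Real

theorem mul_sin_lt_sin_mul {α φ : ℝ} (hα0 : 0 < α) (hα1 : α < 1) (hφ0 : 0 < φ) (hφπ : φ ≤ π) :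
    α * sin φ < sin (α * φ) := by
  have h := strictConcaveOn_sin_Icc.2 ⟨le_rfl, pi_pos.le⟩ ⟨hφ0.le, hφπ⟩ hφ0.ne
    (sub_pos.2 hα1) hα0 (by ring)
  simpa only [smul_eq_mul, sin_zero, mul_zero, zero_add] using h

theorem mul_abs_sin_lt_abs_sin_mul {α θ : ℝ} (hα0 : 0 < α) (hα1 : α < 1) (hθ : θ ≠ 0)
    (hθ₁ : -π ≤ θ) (hθ₂ : θ ≤ π) : α * |sin θ| < |sin (α * θ)| := by
  wlog hpos : 0 < θ generalizing θ
  · simpa [mul_neg] using this (neg_ne_zero.2 hθ) (by linarith) (by linarith)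
      (neg_pos.2 (lt_of_le_of_ne (not_lt.1 hpos) hθ))
  have hsin : 0 ≤ sin θ := sin_nonneg_of_nonneg_of_le_pi hpos.le hθ₂
  have hlt := mul_sin_lt_sin_mul hα0 hα1 hpos hθ₂
  rw [abs_of_nonneg hsin, abs_of_pos ((mul_nonneg hα0.le hsin).trans_lt hlt)]
  exact hlt

end Real

theorem zener_deriv_eq_mul {s a b α : ℂ} (hs : s ≠ 0) :
    2 * s * ((1 + a * s ^ α) / (1 + b * s ^ α))
      + s ^ 2 * (α * s ^ (α - 1) * (a - b) / (1 + b * s ^ α) ^ 2)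
      = s / (1 + b * s ^ α) ^ 2
        * (2 * (1 + a * s ^ α) * (1 + b * s ^ α) + α * s ^ α * (a - b)) := by
  rw [cpow_sub _ _ hs, cpow_one]
  field_simp

theorem two_mul_eq_of_double_root {K : Type*} [Field K] {s u a b α : K}
    (hD : 1 + b * u ≠ 0) (hroot : s ^ 2 * (1 + a * u) = -(1 + b * u))
    (hcrit : 2 * (1 + a * u) * (1 + b * u) + α * u * (a - b) = 0) :
    2 * b * u = -(2 + α) - α * s ^ 2 ∧ 2 * a * (s ^ 2 * u) = α + (α - 2) * s ^ 2 := by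
  have hN : 1 + a * u ≠ 0 := fun hN => hD (by linear_combination hroot - s ^ 2 * hN)
  have hfac : (1 + a * u) * (2 * s ^ 2 * (1 + a * u) - α * (1 + s ^ 2)) = 0 := by
    linear_combination (2 * (1 + a * u) - α) * hroot - hcrit
  have hA : 2 * s ^ 2 * (1 + a * u) = α * (1 + s ^ 2) :=
    sub_eq_zero.1 ((mul_eq_zero.1 hfac).resolve_left hN)
  exact ⟨by linear_combination 2 * hroot - hA, by linear_combination hA⟩

theorem four_normSq_mul_im_sq_eq {a b α : ℝ} {w u : ℂ}
    (hb : 2 * b * u = -(2 + α) - α * w) (ha : 2 * a * (w * u) = α + (α - 2) * w) :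
    4 * normSq w * u.im ^ 2 = α ^ 2 * w.im ^ 2 * normSq u := by
  obtain ⟨hb_re, hb_im⟩ := Complex.ext_iff.1 hb
  obtain ⟨ha_re, ha_im⟩ := Complex.ext_iff.1 ha
  simp only [mul_re, mul_im, add_re, add_im, sub_re, sub_im, neg_re, neg_im, ofReal_re,
    ofReal_im, re_ofNat, im_ofNat] at hb_re hb_im ha_re ha_im
  have hb_par : (2 + α) * u.im = α * (u.re * w.im - u.im * w.re) := by
    linear_combination u.im * hb_re - u.re * hb_im
  have ha_par : (2 - α) * normSq w * u.im = α * (u.im * w.re + u.re * w.im) := by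
    rw [normSq_apply]
    linear_combination (u.im * w.re + u.re * w.im) * ha_re - (u.re * w.re - u.im * w.im) * ha_im
  simp only [normSq_apply] at ha_par ⊢
  linear_combination (2 + α) * u.im * ha_par + α * (u.im * w.re + u.re * w.im) * hb_par

theorem sq_mul_im_sq_mul_normSq_cpow_lt {α : ℝ} (hα0 : 0 < α) (hα1 : α < 1) {s : ℂ}
    (harg : arg s ≠ 0) :
    α ^ 2 * (s ^ 2).im ^ 2 * normSq (s ^ (α : ℂ)) < 4 * normSq (s ^ 2) * (s ^ (α : ℂ)).im ^ 2 := by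
  have hs : s ≠ 0 := by rintro rfl; exact harg arg_zero
  set θ := arg s
  set r := ‖s‖
  set R := r ^ α
  have hsq : (s ^ 2).im = 2 * r ^ 2 * (Real.sin θ * Real.cos θ) := by
    rw [pow_two, mul_im, ← norm_mul_cos_arg s, ← norm_mul_sin_arg s]; ring
  have hnormSq : normSq (s ^ 2) = r ^ 4 := by
    rw [map_pow, normSq_eq_norm_sq]; ring
  have hnormSq_cpow : normSq (s ^ (α : ℂ)) = R ^ 2 := by
    rw [normSq_apply, cpow_ofReal_re, cpow_ofReal_im]
    linear_combination R ^ 2 * Real.sin_sq_add_cos_sq (θ * α)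
  have hsin := Real.mul_abs_sin_lt_abs_sin_mul hα0 hα1 harg (neg_pi_lt_arg s).le (arg_le_pi s)
  calc α ^ 2 * (s ^ 2).im ^ 2 * normSq (s ^ (α : ℂ))
      = 4 * r ^ 4 * R ^ 2 * ((α * |Real.sin θ|) ^ 2 * Real.cos θ ^ 2) := by
        rw [hsq, hnormSq_cpow, mul_pow α, sq_abs]; ring
    _ ≤ 4 * r ^ 4 * R ^ 2 * (α * |Real.sin θ|) ^ 2 := by
        gcongr; exact mul_le_of_le_one_right (sq_nonneg _) (Real.cos_sq_le_one θ)
    _ < 4 * r ^ 4 * R ^ 2 * |Real.sin (α * θ)| ^ 2 := by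
        gcongr
    _ = 4 * normSq (s ^ 2) * (s ^ (α : ℂ)).im ^ 2 := by
        rw [hnormSq, cpow_ofReal_im, sq_abs, mul_comm α]; ring

theorem two_mul_cpow_ne_of_arg_eq_zero {s : ℂ} {b α : ℝ} (hb : 0 ≤ b) (hα : 0 ≤ α)
    (harg : arg s = 0) : 2 * b * s ^ (α : ℂ) ≠ -(2 + α) - α * s ^ 2 := by
  intro h
  have hre := congrArg re h
  have him : s.im = 0 := (arg_eq_zero_iff.1 harg).2
  simp only [mul_re, re_ofNat, ofReal_re, im_ofNat, ofReal_im, mul_zero, sub_zero, cpow_ofReal_re,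
    harg, zero_mul, Real.cos_zero, mul_one, mul_im, add_zero, neg_add_rev, pow_two, sub_re, add_re,
    neg_re, him] at hre
  linarith [mul_nonneg hb (Real.rpow_nonneg (norm_nonneg s) α), mul_nonneg hα (mul_self_nonneg s.re)]

/-- For the fractional Zener model with `0 < a < b`, `α ∈ (0,1)`, every zero `s₀` of
`f(s) = 1 + s²(1+as^α)/(1+bs^α)` in the slit plane is simple:
`f'(s₀) = 2s₀M(s₀)² + s₀²·α s₀^{α−1}(a−b)/(1+bs₀^α)² ≠ 0`. -/
theorem fractional_zener_zero_simple (a b α : ℝ) (ha : 0 < a) (hab : a < b)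
    (hα0 : 0 < α) (hα1 : α < 1) (s₀ : ℂ) (hs₀ : s₀ ∈ Complex.slitPlane)
    (hzero : 1 + s₀ ^ 2 * (1 + (a : ℂ) * s₀ ^ (α : ℂ)) / (1 + (b : ℂ) * s₀ ^ (α : ℂ)) = 0) :
    2 * s₀ * ((1 + (a : ℂ) * s₀ ^ (α : ℂ)) / (1 + (b : ℂ) * s₀ ^ (α : ℂ)))
      + s₀ ^ 2 * ((α : ℂ) * s₀ ^ ((α : ℂ) - 1) * ((a : ℂ) - (b : ℂ)) /
          (1 + (b : ℂ) * s₀ ^ (α : ℂ)) ^ 2) ≠ 0 := by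
  have hs : s₀ ≠ 0 := slitPlane_ne_zero hs₀
  have hD : 1 + (b : ℂ) * s₀ ^ (α : ℂ) ≠ 0 := by
    intro hD
    simp [hD] at hzero
  have hroot : s₀ ^ 2 * (1 + (a : ℂ) * s₀ ^ (α : ℂ)) = -(1 + (b : ℂ) * s₀ ^ (α : ℂ)) := by
    rw [add_div' _ _ _ hD, div_eq_zero_iff, or_iff_left hD] at hzero
    linear_combination hzero
  rw [zener_deriv_eq_mul hs]
  refine mul_ne_zero (div_ne_zero hs (pow_ne_zero 2 hD)) fun hcrit => ?_
  obtain ⟨hb_eq, ha_eq⟩ := two_mul_eq_of_double_root hD hroot hcrit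
  by_cases harg : arg s₀ = 0
  · exact two_mul_cpow_ne_of_arg_eq_zero (ha.trans hab).le hα0.le harg hb_eq
  · exact (sq_mul_im_sq_mul_normSq_cpow_lt hα0 hα1 harg).ne'
      (four_normSq_mul_im_sq_eq hb_eq ha_eq)
end
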